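/- arXiv:2506.18632 — 6 statements merged into one kernel-verified Lean document; each statement's English description precedes it below -/
import Mathlib

section
/- Let (j_t, f_t)_{t≥0} be a time-homogeneous Markov chain on ℤ × F with F a finite set, such that the increment J_t = j_{t+1} - j_t depends (in distribution, and in particular in expectation) only on f_t, i.e. E[J_t | f_t = f, j_t = k] = E[j_1 | f_0 = f, j_0 = 0] for all f, k, t. If the limit R = lim_{t→∞} E[J_t] exists and is finite, then R ≥ min over f ∈ F of max( E[J_t | f_t = f], (1/2)·E[J_t + J_{t+1} | f_t = f] ). -/
/-! With `m` the min-max bound, the potential `φ f = max 0 (m - g f)` satisfies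
`m + φ(f) ≤ E[g(f') + φ(f') | f]` for one step of the chain: if `g f ≥ m` this holds since
`g + φ = max g m`, and otherwise `g f < m ≤ g2 f / 2` and `E[g(f') | f] = g2 f - g f ≥ 2m - g f`.
Averaging over the law at time `t`, the bounded quantity `E[φ(f_t)]` would grow linearly if the
drift `E[g(f_t)]` stayed below `m`. -/

open MeasureTheory ProbabilityTheory Filter

lemma le_of_tendsto_of_potential {a Φ : ℕ → ℝ} {m R C : ℝ} (ha : Tendsto a atTop (nhds R))
    (hΦ : ∀ t, Φ t ≤ C) (hstep : ∀ t, m + Φ t ≤ a (t + 1) + Φ (t + 1)) : m ≤ R := by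
  by_contra! hRm
  obtain ⟨r, hRr, hrm⟩ := exists_between hRm
  obtain ⟨N, hN⟩ := eventually_atTop.mp (ha.eventually_lt_const hRr)
  have grow : ∀ k : ℕ, Φ N + k * (m - r) ≤ Φ (N + k) := by
    intro k
    induction k with
    | zero => simp
    | succ k ih =>
      have := hN (N + k + 1) (by omega)
      have := hstep (N + k)
      push_cast
      rw [← add_assoc]
      linarith
  obtain ⟨k, hk⟩ := exists_nat_gt ((C - Φ N) / (m - r))
  rw [div_lt_iff₀ (sub_pos.2 hrm)] at hk
  linarith [(grow k).trans (hΦ (N + k))]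

section KernelComp

variable {α β : Type*} [MeasurableSpace α] [MeasurableSpace β] {ν : Measure α} {κ : Kernel α β}
  {h : β → ℝ}

lemma integral_comp_eq_integral_integral (hh : Integrable h (κ ∘ₘ ν)) :
    ∫ y, h y ∂(κ ∘ₘ ν) = ∫ x, ∫ y, h y ∂κ x ∂ν := by
  rw [Measure.comp_eq_comp_const_apply] at hh ⊢
  rw [Kernel.integral_comp hh]
  simp

lemma integrable_integral_of_integrable_comp (hh : Integrable h (κ ∘ₘ ν)) :
    Integrable (fun x => ∫ y, h y ∂κ x) ν := by
  rw [Measure.comp_eq_comp_const_apply] at hh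
  simpa using hh.integral_comp

end KernelComp

theorem le_of_tendsto_integral_of_potential {α : Type*} [MeasurableSpace α]
    (κ : Kernel α α) (ν : ℕ → Measure α) [∀ t, IsProbabilityMeasure (ν t)]
    (hchain : ∀ t, ν (t + 1) = κ ∘ₘ ν t) {G Ψ : α → ℝ} {CG CΨ m R : ℝ}
    (hGm : Measurable G) (hG : ∀ x, ‖G x‖ ≤ CG) (hΨm : Measurable Ψ) (hΨ : ∀ x, ‖Ψ x‖ ≤ CΨ)
    (hκ : ∀ x, m + Ψ x ≤ ∫ y, G y + Ψ y ∂κ x)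
    (hR : Tendsto (fun t => ∫ x, G x ∂ν t) atTop (nhds R)) : m ≤ R := by
  have hGi (t : ℕ) : Integrable G (ν t) := .of_bound hGm.aestronglyMeasurable _ (ae_of_all _ hG)
  have hΨi (t : ℕ) : Integrable Ψ (ν t) := .of_bound hΨm.aestronglyMeasurable _ (ae_of_all _ hΨ)
  refine le_of_tendsto_of_potential hR (Φ := fun t => ∫ x, Ψ x ∂ν t) (C := CΨ)
    (fun t => ?_) (fun t => ?_)
  · have := norm_integral_le_of_norm_le_const (μ := ν t) (ae_of_all _ hΨ)
    simp only [probReal_univ, mul_one] at this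
    exact (le_abs_self _).trans this
  · have hnext : Integrable (fun y => G y + Ψ y) (κ ∘ₘ ν t) := hchain t ▸ (hGi _).add (hΨi _)
    calc m + ∫ x, Ψ x ∂ν t = ∫ x, m + Ψ x ∂ν t := by
          rw [integral_add (integrable_const m) (hΨi t)]
          simp
      _ ≤ ∫ x, ∫ y, G y + Ψ y ∂κ x ∂ν t :=
          integral_mono ((integrable_const m).add (hΨi t))
            (integrable_integral_of_integrable_comp hnext) hκ
      _ = ∫ y, G y + Ψ y ∂ν (t + 1) := by
          rw [hchain t, integral_comp_eq_integral_integral hnext]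
      _ = ∫ x, G x ∂ν (t + 1) + ∫ x, Ψ x ∂ν (t + 1) := integral_add (hGi _) (hΨi _)

lemma add_max_sub_le_integral {β : Type*} [MeasurableSpace β] {ν : Measure β}
    [IsProbabilityMeasure ν] {G : β → ℝ} (hG : Integrable G ν) {m x : ℝ}
    (hx : x < m → 2 * m - x ≤ ∫ y, G y ∂ν) :
    m + max 0 (m - x) ≤ ∫ y, G y + max 0 (m - G y) ∂ν := by
  have hmax (y : β) : G y + max 0 (m - G y) = max (G y) m := by
    rw [add_comm, ← max_add_add_right]
    simp
  have hint : Integrable (fun y => G y + max 0 (m - G y)) ν :=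
    (hG.sup (integrable_const m)).congr (ae_of_all _ fun y => (hmax y).symm)
  rcases le_or_gt m x with hmx | hxm
  · rw [max_eq_left (sub_nonpos.2 hmx), add_zero]
    calc m = ∫ _, m ∂ν := by simp
      _ ≤ _ := integral_mono (integrable_const m) hint fun y => by
          rw [hmax]
          exact le_max_right _ _
  · rw [max_eq_right (sub_nonneg.2 hxm.le)]
    calc m + (m - x) = 2 * m - x := by ring
      _ ≤ ∫ y, G y ∂ν := hx hxm
      _ ≤ _ := integral_mono hG hint fun y => le_add_of_nonneg_right (le_max_left _ _)

lemma integral_eq_sub_of_integral_add {β : Type*} [MeasurableSpace β] {ν : Measure β}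
    {u v : β → ℝ} {a b : ℝ} (hv : Integrable v ν) (hu : ∫ y, u y ∂ν = a)
    (huv : ∫ y, u y + v y ∂ν = b) (hab : a ≠ 0 ∨ b ≠ 0) : ∫ y, v y ∂ν = b - a := by
  have hui : Integrable u ν := by
    rcases hab with ha | hb
    · exact .of_integral_ne_zero (hu ▸ ha)
    · refine ((Integrable.of_integral_ne_zero (huv ▸ hb)).sub hv).congr (ae_of_all _ fun y => ?_)
      simp
  rw [← hu, ← huv, integral_add hui hv]
  ring

/-- Lemma (min-max drift bound): for a homogeneous Markov chain `(j_t, f_t)` on `ℤ × F`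
(`F` finite), given by a Markov kernel `κ` and marginal laws `μ t`, such that the mean
increment of `j` in one step depends only on the `F`-component (function `g`), and where
`g2 f` is the mean two-step increment from a state with `F`-component `f`, if the mean
drift `E[J_t] = ∫ g(f) dμ_t` converges to a finite limit `R`, then
`R ≥ min_{f ∈ F} max (g f) ((1/2) (g2 f))`. -/
theorem stmt0 {F : Type*} [Fintype F] [Nonempty F] [MeasurableSpace F]
    [MeasurableSingletonClass F]
    (κ : Kernel (ℤ × F) (ℤ × F)) [IsMarkovKernel κ]
    (μ : ℕ → Measure (ℤ × F)) [∀ t, IsProbabilityMeasure (μ t)]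
    (hchain : ∀ t, μ (t + 1) = (μ t).bind (fun p => κ p))
    (g : F → ℝ)
    (hg : ∀ p : ℤ × F, (∫ q, ((q.1 - p.1 : ℤ) : ℝ) ∂(κ p)) = g p.2)
    (g2 : F → ℝ)
    (hg2 : ∀ p : ℤ × F, (∫ q, (((q.1 - p.1 : ℤ) : ℝ) + g q.2) ∂(κ p)) = g2 p.2)
    (R : ℝ)
    (hR : Tendsto (fun t => ∫ p, g p.2 ∂(μ t)) atTop (nhds R)) :
    R ≥ Finset.univ.inf' Finset.univ_nonempty
      (fun f => max (g f) ((1 / 2) * g2 f)) := by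
  set m := Finset.univ.inf' Finset.univ_nonempty fun f => max (g f) ((1 / 2) * g2 f)
  obtain ⟨Cg, hCg⟩ := Finite.exists_le fun f => ‖g f‖
  obtain ⟨Cφ, hCφ⟩ := Finite.exists_le fun f => ‖max 0 (m - g f)‖
  have hgi (p : ℤ × F) : Integrable (fun q : ℤ × F => g q.2) (κ p) :=
    .of_bound (measurable_of_finite g |>.comp measurable_snd).aestronglyMeasurable _
      (ae_of_all _ fun q => hCg q.2)
  have hnext (p : ℤ × F) (hgm : g p.2 < m) : 2 * m - g p.2 ≤ ∫ q, g q.2 ∂κ p := by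
    have hm2 : 2 * m ≤ g2 p.2 := by
      have := Finset.inf'_le (fun f => max (g f) ((1 / 2) * g2 f)) (Finset.mem_univ p.2)
      rcases le_max_iff.1 this with h | h <;> linarith
    -- excludes the junk case of a non-integrable increment, where `hg` and `hg2` read `0 = 0`
    have hab : g p.2 ≠ 0 ∨ g2 p.2 ≠ 0 := by
      by_contra! h
      linarith
    have := integral_eq_sub_of_integral_add (hgi p) (hg p) (hg2 p) hab
    linarith
  exact le_of_tendsto_integral_of_potential κ μ hchain (G := fun p => g p.2)
    (Ψ := fun p => max 0 (m - g p.2))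
    (measurable_of_finite g |>.comp measurable_snd) (fun p => hCg p.2)
    (measurable_of_finite (fun f => max 0 (m - g f)) |>.comp measurable_snd) (fun p => hCφ p.2)
    (fun p => add_max_sub_le_integral (hgi p) (hnext p)) hR
end

section
/- For all ε₀, ε₁ ∈ [0,1/2] with r = 1 - ε₀ - ε₁ > 0 and (ε₀,ε₁) ≠ (0,0), we have (1 + ε₀r² + 2ε₀²r + ε₀²)·(-(1/2)r² - 2ε₀r + ε₀²r + (1/2)ε₁² + (1-r)²/r) + (1 - ε₀r² - 2ε₀²r - ε₀²)·(-(1/2)r + ε₁r + (1/2)ε₀(1-ε₁)r + (1/2)ε₁²r + (1/2)(1-r)² + (1/2)ε₁² + (1-r)²/r) > -1. -/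
set_option maxHeartbeats 1000000 in
/-- Two-step drift lower bound for the `n = 2` boundary state `(0,0)` is `> -1`. -/
theorem stmt4 (e0 e1 : ℝ) (h00 : 0 ≤ e0) (h01 : e0 ≤ 1 / 2)
    (h10 : 0 ≤ e1) (h11 : e1 ≤ 1 / 2)
    (r : ℝ) (hr : r = 1 - e0 - e1) (hrpos : 0 < r)
    (hne : (e0, e1) ≠ (0, 0)) :
    (1 + e0 * r ^ 2 + 2 * e0 ^ 2 * r + e0 ^ 2)
        * (-(1 / 2) * r ^ 2 - 2 * e0 * r + e0 ^ 2 * r + (1 / 2) * e1 ^ 2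
            + (1 - r) ^ 2 / r)
      + (1 - e0 * r ^ 2 - 2 * e0 ^ 2 * r - e0 ^ 2)
        * (-(1 / 2) * r + e1 * r + (1 / 2) * e0 * (1 - e1) * r + (1 / 2) * e1 ^ 2 * r
            + (1 / 2) * (1 - r) ^ 2 + (1 / 2) * e1 ^ 2 + (1 - r) ^ 2 / r)
      > -1 := by
  have hrne : r ≠ 0 := ne_of_gt hrpos
  have hpos : 0 < e0 + e1 := by
    rcases lt_or_eq_of_le h00 with h | h
    · linarith
    · rcases lt_or_eq_of_le h10 with h' | h'
      · linarith
      · exact absurd (by rw [← h, ← h']) hne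
  have h1 : (2:ℝ) ≤ 5/2 - e1^2 + (1/2)*e1^3 + e0 + (1/2)*e0*e1 + e0*e1^2
      - (5/2)*e0*e1^3 + 2*e0*e1^4 - (1/2)*e0*e1^5 := by
    nlinarith [mul_nonneg h00 h10, sq_nonneg e1, mul_nonneg (mul_nonneg h00 h10) h10,
      mul_nonneg h10 h10, sq_nonneg (e1*e1), mul_nonneg h00 (sq_nonneg (e1*e1))]
  have h2 : (2:ℝ) ≤ 5/2 + 5*e1 - 12*e1^2 + 8*e1^3 - e1^4 - (1/2)*e1^5
      - e0 - (17/2)*e0*e1 + (33/2)*e0*e1^2 - (21/2)*e0*e1^3 + 2*e0*e1^4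
      + 4*e0^2 - e0^2*e1 - (11/2)*e0^2*e1^2 + 3*e0^2*e1^3
      - 7*e0^3 + (13/2)*e0^3*e1 - (1/2)*e0^3*e1^2
      + (9/2)*e0^4 - (5/2)*e0^4*e1 - e0^5 := by
    have hx : (0:ℝ) ≤ 2*e0 := by linarith
    have hu : (0:ℝ) ≤ 1-2*e0 := by linarith
    have hy : (0:ℝ) ≤ 2*e1 := by linarith
    have hv : (0:ℝ) ≤ 1-2*e1 := by linarith
    linarith [mul_nonneg (mul_nonneg (mul_nonneg (pow_nonneg hx 0) (pow_nonneg hu 5)) (pow_nonneg hy 0)) (pow_nonneg hv 5),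
      mul_nonneg (mul_nonneg (mul_nonneg (pow_nonneg hx 0) (pow_nonneg hu 5)) (pow_nonneg hy 1)) (pow_nonneg hv 4),
      mul_nonneg (mul_nonneg (mul_nonneg (pow_nonneg hx 0) (pow_nonneg hu 5)) (pow_nonneg hy 2)) (pow_nonneg hv 3),
      mul_nonneg (mul_nonneg (mul_nonneg (pow_nonneg hx 0) (pow_nonneg hu 5)) (pow_nonneg hy 3)) (pow_nonneg hv 2),
      mul_nonneg (mul_nonneg (mul_nonneg (pow_nonneg hx 0) (pow_nonneg hu 5)) (pow_nonneg hy 4)) (pow_nonneg hv 1),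
      mul_nonneg (mul_nonneg (mul_nonneg (pow_nonneg hx 0) (pow_nonneg hu 5)) (pow_nonneg hy 5)) (pow_nonneg hv 0),
      mul_nonneg (mul_nonneg (mul_nonneg (pow_nonneg hx 1) (pow_nonneg hu 4)) (pow_nonneg hy 0)) (pow_nonneg hv 5),
      mul_nonneg (mul_nonneg (mul_nonneg (pow_nonneg hx 1) (pow_nonneg hu 4)) (pow_nonneg hy 1)) (pow_nonneg hv 4),
      mul_nonneg (mul_nonneg (mul_nonneg (pow_nonneg hx 1) (pow_nonneg hu 4)) (pow_nonneg hy 2)) (pow_nonneg hv 3),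
      mul_nonneg (mul_nonneg (mul_nonneg (pow_nonneg hx 1) (pow_nonneg hu 4)) (pow_nonneg hy 3)) (pow_nonneg hv 2),
      mul_nonneg (mul_nonneg (mul_nonneg (pow_nonneg hx 1) (pow_nonneg hu 4)) (pow_nonneg hy 4)) (pow_nonneg hv 1),
      mul_nonneg (mul_nonneg (mul_nonneg (pow_nonneg hx 1) (pow_nonneg hu 4)) (pow_nonneg hy 5)) (pow_nonneg hv 0),
      mul_nonneg (mul_nonneg (mul_nonneg (pow_nonneg hx 2) (pow_nonneg hu 3)) (pow_nonneg hy 0)) (pow_nonneg hv 5),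
      mul_nonneg (mul_nonneg (mul_nonneg (pow_nonneg hx 2) (pow_nonneg hu 3)) (pow_nonneg hy 1)) (pow_nonneg hv 4),
      mul_nonneg (mul_nonneg (mul_nonneg (pow_nonneg hx 2) (pow_nonneg hu 3)) (pow_nonneg hy 2)) (pow_nonneg hv 3),
      mul_nonneg (mul_nonneg (mul_nonneg (pow_nonneg hx 2) (pow_nonneg hu 3)) (pow_nonneg hy 3)) (pow_nonneg hv 2),
      mul_nonneg (mul_nonneg (mul_nonneg (pow_nonneg hx 2) (pow_nonneg hu 3)) (pow_nonneg hy 4)) (pow_nonneg hv 1),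
      mul_nonneg (mul_nonneg (mul_nonneg (pow_nonneg hx 2) (pow_nonneg hu 3)) (pow_nonneg hy 5)) (pow_nonneg hv 0),
      mul_nonneg (mul_nonneg (mul_nonneg (pow_nonneg hx 3) (pow_nonneg hu 2)) (pow_nonneg hy 0)) (pow_nonneg hv 5),
      mul_nonneg (mul_nonneg (mul_nonneg (pow_nonneg hx 3) (pow_nonneg hu 2)) (pow_nonneg hy 1)) (pow_nonneg hv 4),
      mul_nonneg (mul_nonneg (mul_nonneg (pow_nonneg hx 3) (pow_nonneg hu 2)) (pow_nonneg hy 2)) (pow_nonneg hv 3),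
      mul_nonneg (mul_nonneg (mul_nonneg (pow_nonneg hx 3) (pow_nonneg hu 2)) (pow_nonneg hy 3)) (pow_nonneg hv 2),
      mul_nonneg (mul_nonneg (mul_nonneg (pow_nonneg hx 3) (pow_nonneg hu 2)) (pow_nonneg hy 4)) (pow_nonneg hv 1),
      mul_nonneg (mul_nonneg (mul_nonneg (pow_nonneg hx 3) (pow_nonneg hu 2)) (pow_nonneg hy 5)) (pow_nonneg hv 0),
      mul_nonneg (mul_nonneg (mul_nonneg (pow_nonneg hx 4) (pow_nonneg hu 1)) (pow_nonneg hy 0)) (pow_nonneg hv 5),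
      mul_nonneg (mul_nonneg (mul_nonneg (pow_nonneg hx 4) (pow_nonneg hu 1)) (pow_nonneg hy 1)) (pow_nonneg hv 4),
      mul_nonneg (mul_nonneg (mul_nonneg (pow_nonneg hx 4) (pow_nonneg hu 1)) (pow_nonneg hy 2)) (pow_nonneg hv 3),
      mul_nonneg (mul_nonneg (mul_nonneg (pow_nonneg hx 4) (pow_nonneg hu 1)) (pow_nonneg hy 3)) (pow_nonneg hv 2),
      mul_nonneg (mul_nonneg (mul_nonneg (pow_nonneg hx 4) (pow_nonneg hu 1)) (pow_nonneg hy 4)) (pow_nonneg hv 1),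
      mul_nonneg (mul_nonneg (mul_nonneg (pow_nonneg hx 4) (pow_nonneg hu 1)) (pow_nonneg hy 5)) (pow_nonneg hv 0),
      mul_nonneg (mul_nonneg (mul_nonneg (pow_nonneg hx 5) (pow_nonneg hu 0)) (pow_nonneg hy 0)) (pow_nonneg hv 5),
      mul_nonneg (mul_nonneg (mul_nonneg (pow_nonneg hx 5) (pow_nonneg hu 0)) (pow_nonneg hy 1)) (pow_nonneg hv 4),
      mul_nonneg (mul_nonneg (mul_nonneg (pow_nonneg hx 5) (pow_nonneg hu 0)) (pow_nonneg hy 2)) (pow_nonneg hv 3),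
      mul_nonneg (mul_nonneg (mul_nonneg (pow_nonneg hx 5) (pow_nonneg hu 0)) (pow_nonneg hy 3)) (pow_nonneg hv 2),
      mul_nonneg (mul_nonneg (mul_nonneg (pow_nonneg hx 5) (pow_nonneg hu 0)) (pow_nonneg hy 4)) (pow_nonneg hv 1),
      mul_nonneg (mul_nonneg (mul_nonneg (pow_nonneg hx 5) (pow_nonneg hu 0)) (pow_nonneg hy 5)) (pow_nonneg hv 0)]
  have key : (1 + e0 * r ^ 2 + 2 * e0 ^ 2 * r + e0 ^ 2)
        * (-(1 / 2) * r ^ 2 - 2 * e0 * r + e0 ^ 2 * r + (1 / 2) * e1 ^ 2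
            + (1 - r) ^ 2 / r)
      + (1 - e0 * r ^ 2 - 2 * e0 ^ 2 * r - e0 ^ 2)
        * (-(1 / 2) * r + e1 * r + (1 / 2) * e0 * (1 - e1) * r + (1 / 2) * e1 ^ 2 * r
            + (1 / 2) * (1 - r) ^ 2 + (1 / 2) * e1 ^ 2 + (1 - r) ^ 2 / r)
      - (-1) =
      (e1 * (5/2 - e1^2 + (1/2)*e1^3 + e0 + (1/2)*e0*e1 + e0*e1^2
          - (5/2)*e0*e1^3 + 2*e0*e1^4 - (1/2)*e0*e1^5)
       + e0^2 * (5/2 + 5*e1 - 12*e1^2 + 8*e1^3 - e1^4 - (1/2)*e1^5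
          - e0 - (17/2)*e0*e1 + (33/2)*e0*e1^2 - (21/2)*e0*e1^3 + 2*e0*e1^4
          + 4*e0^2 - e0^2*e1 - (11/2)*e0^2*e1^2 + 3*e0^2*e1^3
          - 7*e0^3 + (13/2)*e0^3*e1 - (1/2)*e0^3*e1^2
          + (9/2)*e0^4 - (5/2)*e0^4*e1 - e0^5)) / r := by
    subst hr
    field_simp
    ring
  have hnum : 0 < 2*e1 + 2*e0^2 := by
    rcases lt_or_eq_of_le h10 with h | h
    · nlinarith [sq_nonneg e0]
    · have he0 : 0 < e0 := by rw [← h] at hpos; linarith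
      nlinarith
  rw [gt_iff_lt, ← sub_pos, key]
  apply div_pos _ hrpos
  nlinarith [mul_le_mul_of_nonneg_left h1 h10, mul_le_mul_of_nonneg_left h2 (sq_nonneg e0)]
end

section
/- For all reals x, y ∈ [0,1/2]: 2x + y + 2x² + 2y² + y⁴ + 4x³y + 3x⁴ ≥ 3y³ + 2xy + 3x²y + 6x³, with strict inequality unless x = y = 0. (This is the key inequality showing E[J̃_t | f_t ∈ S₁] ≥ I₀.) -/
/-- Key inequality showing `E[J̃_t | f_t ∈ S₁] ≥ I₀`: strict unless `x = y = 0`. -/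
theorem stmt12 (x y : ℝ) (hx0 : 0 ≤ x) (hx1 : x ≤ 1 / 2)
    (hy0 : 0 ≤ y) (hy1 : y ≤ 1 / 2) :
    (2 * x + y + 2 * x ^ 2 + 2 * y ^ 2 + y ^ 4 + 4 * x ^ 3 * y + 3 * x ^ 4
      ≥ 3 * y ^ 3 + 2 * x * y + 3 * x ^ 2 * y + 6 * x ^ 3) ∧
    ((x, y) ≠ (0, 0) →
      2 * x + y + 2 * x ^ 2 + 2 * y ^ 2 + y ^ 4 + 4 * x ^ 3 * y + 3 * x ^ 4
        > 3 * y ^ 3 + 2 * x * y + 3 * x ^ 2 * y + 6 * x ^ 3) := by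
  constructor
  · nlinarith [sq_nonneg (x-y), sq_nonneg (x+y), sq_nonneg x, sq_nonneg y, mul_nonneg hx0 hy0, sq_nonneg (x*y), mul_nonneg (mul_nonneg hx0 hx0) hy0, mul_nonneg (mul_nonneg hy0 hy0) hy0, sq_nonneg (x-y)]
  · intro h
    have h' : 0 < x ∨ 0 < y := by
      rcases lt_or_eq_of_le hx0 with hx | hx
      · exact Or.inl hx
      rcases lt_or_eq_of_le hy0 with hy | hy
      · exact Or.inr hy
      exact absurd (by simp [← hx, ← hy]) h
    rcases h' with hx | hy
    · nlinarith [sq_nonneg (x-y), mul_nonneg hx0 hy0, sq_nonneg (x*y), mul_nonneg (mul_nonneg hy0 hy0) hy0, mul_pos hx hx]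
    · nlinarith [sq_nonneg (x-y), mul_nonneg hx0 hy0, sq_nonneg (x*y), mul_nonneg (mul_nonneg hy0 hy0) hy0, mul_pos hy hy]
end

section
/- For reals x, y ∈ [0,1/2] with (x,y) ≠ (0,0) and r = 1 - x - y, the following quantity is strictly greater than -2: -2 + 2(1-r)³/r + 3y + 4y² + y⁴ + 2xy + 3xy² + 5xy³ + 14xy⁵ + xy⁷ + 7x²y + 13x²y³ + 10x²y⁵ + x²y⁷ + 11x³y + 26x³y³ + 2x³y⁵ + 3x⁴ + 49x⁴y² + 18x⁴y⁴ + 12x⁵y + 11x⁵y³ + 2x⁶y² + 3x⁷ + 3x⁸y + 2x⁹ - (3y³ + 15xy⁴ + 6xy⁶ + 13x²y² + 12x²y⁴ + 5x²y⁶ + 25x³y² + 12x³y⁴ + 24x⁴y + 43x⁴y³ + 3x⁴y⁵ + x⁵ + 19x⁵y² + 2x⁵y⁴ + x⁶y + x⁶y³ + 4x⁷y + 5x⁸). -/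
lemma mb (x y : ℝ) (hx0 : 0 ≤ x) (hx1 : x ≤ 1/2) (hy0 : 0 ≤ y) (hy1 : y ≤ 1/2)
    (a' b' da db : ℕ) :
    x ^ (a' + da) * y ^ (b' + db) ≤ (1/2) ^ (da + db) * (x ^ a' * y ^ b') := by
  have h1 : x ^ da ≤ (1/2:ℝ) ^ da := pow_le_pow_left₀ hx0 hx1 da
  have h2 : y ^ db ≤ (1/2:ℝ) ^ db := pow_le_pow_left₀ hy0 hy1 db
  have h3 : x ^ da * y ^ db ≤ (1/2:ℝ) ^ da * (1/2) ^ db :=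
    mul_le_mul h1 h2 (by positivity) (by positivity)
  calc x ^ (a'+da) * y ^ (b'+db) = (x^a' * y^b') * (x^da * y^db) := by ring
    _ ≤ (x^a' * y^b') * ((1/2)^da * (1/2)^db) :=
        mul_le_mul_of_nonneg_left h3 (by positivity)
    _ = (1/2)^(da+db) * (x^a'*y^b') := by ring

/-- Two-step drift lower bound for the `n = 3` boundary state `(1,0,0,0)` is `> -2`
(Appendix A.2 of the paper). -/
theorem stmt14 (x y : ℝ) (hx0 : 0 ≤ x) (hx1 : x ≤ 1 / 2)
    (hy0 : 0 ≤ y) (hy1 : y ≤ 1 / 2) (hne : (x, y) ≠ (0, 0))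
    (r : ℝ) (hr : r = 1 - x - y) :
    -2 + 2 * (1 - r) ^ 3 / r
      + 3 * y + 4 * y ^ 2 + y ^ 4 + 2 * x * y + 3 * x * y ^ 2 + 5 * x * y ^ 3
      + 14 * x * y ^ 5 + x * y ^ 7 + 7 * x ^ 2 * y + 13 * x ^ 2 * y ^ 3
      + 10 * x ^ 2 * y ^ 5 + x ^ 2 * y ^ 7 + 11 * x ^ 3 * y + 26 * x ^ 3 * y ^ 3
      + 2 * x ^ 3 * y ^ 5 + 3 * x ^ 4 + 49 * x ^ 4 * y ^ 2 + 18 * x ^ 4 * y ^ 4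
      + 12 * x ^ 5 * y + 11 * x ^ 5 * y ^ 3 + 2 * x ^ 6 * y ^ 2 + 3 * x ^ 7
      + 3 * x ^ 8 * y + 2 * x ^ 9
      - (3 * y ^ 3 + 15 * x * y ^ 4 + 6 * x * y ^ 6 + 13 * x ^ 2 * y ^ 2
        + 12 * x ^ 2 * y ^ 4 + 5 * x ^ 2 * y ^ 6 + 25 * x ^ 3 * y ^ 2
        + 12 * x ^ 3 * y ^ 4 + 24 * x ^ 4 * y + 43 * x ^ 4 * y ^ 3
        + 3 * x ^ 4 * y ^ 5 + x ^ 5 + 19 * x ^ 5 * y ^ 2 + 2 * x ^ 5 * y ^ 4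
        + x ^ 6 * y + x ^ 6 * y ^ 3 + 4 * x ^ 7 * y + 5 * x ^ 8)
    > -2 := by
  have hxy : 0 < y + x ^ 4 := by
    rcases lt_or_eq_of_le hy0 with hy | hy
    · positivity
    rcases lt_or_eq_of_le hx0 with hx | hx
    · positivity
    · exact absurd (by rw [← hx, ← hy]) hne
  have hdiv : 0 ≤ 2 * (1 - r) ^ 3 / r := by
    rcases eq_or_ne r 0 with h0 | h0
    · simp [h0]
    · have hrpos : 0 < r := by
        rcases lt_or_eq_of_le (show (0:ℝ) ≤ r by nlinarith [hr]) with h | h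
        · exact h
        · exact absurd h.symm h0
      have : 0 ≤ (1 - r) ^ 3 := by
        have : 0 ≤ 1 - r := by nlinarith
        positivity
      positivity
  have hP : y + x ^ 4 ≤
      3 * y + 4 * y ^ 2 + y ^ 4 + 2 * x * y + 3 * x * y ^ 2 + 5 * x * y ^ 3
      + 14 * x * y ^ 5 + x * y ^ 7 + 7 * x ^ 2 * y + 13 * x ^ 2 * y ^ 3
      + 10 * x ^ 2 * y ^ 5 + x ^ 2 * y ^ 7 + 11 * x ^ 3 * y + 26 * x ^ 3 * y ^ 3
      + 2 * x ^ 3 * y ^ 5 + 3 * x ^ 4 + 49 * x ^ 4 * y ^ 2 + 18 * x ^ 4 * y ^ 4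
      + 12 * x ^ 5 * y + 11 * x ^ 5 * y ^ 3 + 2 * x ^ 6 * y ^ 2 + 3 * x ^ 7
      + 3 * x ^ 8 * y + 2 * x ^ 9
      - (3 * y ^ 3 + 15 * x * y ^ 4 + 6 * x * y ^ 6 + 13 * x ^ 2 * y ^ 2
        + 12 * x ^ 2 * y ^ 4 + 5 * x ^ 2 * y ^ 6 + 25 * x ^ 3 * y ^ 2
        + 12 * x ^ 3 * y ^ 4 + 24 * x ^ 4 * y + 43 * x ^ 4 * y ^ 3
        + 3 * x ^ 4 * y ^ 5 + x ^ 5 + 19 * x ^ 5 * y ^ 2 + 2 * x ^ 5 * y ^ 4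
        + x ^ 6 * y + x ^ 6 * y ^ 3 + 4 * x ^ 7 * y + 5 * x ^ 8) := by
    linarith [mb x y hx0 hx1 hy0 hy1 0 1 0 2,
      mb x y hx0 hx1 hy0 hy1 0 1 2 1,
      mb x y hx0 hx1 hy0 hy1 0 2 2 0,
      mb x y hx0 hx1 hy0 hy1 0 2 1 2,
      mb x y hx0 hx1 hy0 hy1 0 2 3 0,
      mb x y hx0 hx1 hy0 hy1 1 1 2 1,
      mb x y hx0 hx1 hy0 hy1 1 1 3 0,
      mb x y hx0 hx1 hy0 hy1 2 1 2 0,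
      mb x y hx0 hx1 hy0 hy1 4 0 1 0,
      mb x y hx0 hx1 hy0 hy1 1 2 1 2,
      mb x y hx0 hx1 hy0 hy1 1 2 0 4,
      mb x y hx0 hx1 hy0 hy1 1 2 2 2,
      mb x y hx0 hx1 hy0 hy1 1 2 3 1,
      mb x y hx0 hx1 hy0 hy1 2 1 2 2,
      mb x y hx0 hx1 hy0 hy1 1 3 3 0,
      mb x y hx0 hx1 hy0 hy1 3 1 2 1,
      mb x y hx0 hx1 hy0 hy1 3 1 3 0,
      mb x y hx0 hx1 hy0 hy1 0 4 2 2,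
      mb x y hx0 hx1 hy0 hy1 3 1 4 0,
      mb x y hx0 hx1 hy0 hy1 4 0 4 0,
      mb x y hx0 hx1 hy0 hy1 0 4 4 1,
      mb x y hx0 hx1 hy0 hy1 0 4 5 0,
      mb x y hx0 hx1 hy0 hy1 1 3 5 0,
      mul_nonneg (pow_nonneg hx0 0) (pow_nonneg hy0 4),
      mul_nonneg (pow_nonneg hx0 1) (pow_nonneg hy0 3),
      mul_nonneg (pow_nonneg hx0 1) (pow_nonneg hy0 5),
      mul_nonneg (pow_nonneg hx0 1) (pow_nonneg hy0 7),
      mul_nonneg (pow_nonneg hx0 2) (pow_nonneg hy0 3),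
      mul_nonneg (pow_nonneg hx0 2) (pow_nonneg hy0 5),
      mul_nonneg (pow_nonneg hx0 2) (pow_nonneg hy0 7),
      mul_nonneg (pow_nonneg hx0 3) (pow_nonneg hy0 1),
      mul_nonneg (pow_nonneg hx0 3) (pow_nonneg hy0 3),
      mul_nonneg (pow_nonneg hx0 3) (pow_nonneg hy0 5),
      mul_nonneg (pow_nonneg hx0 4) (pow_nonneg hy0 0),
      mul_nonneg (pow_nonneg hx0 4) (pow_nonneg hy0 2),
      mul_nonneg (pow_nonneg hx0 4) (pow_nonneg hy0 4),
      mul_nonneg (pow_nonneg hx0 5) (pow_nonneg hy0 1),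
      mul_nonneg (pow_nonneg hx0 5) (pow_nonneg hy0 3),
      mul_nonneg (pow_nonneg hx0 6) (pow_nonneg hy0 2),
      mul_nonneg (pow_nonneg hx0 7) (pow_nonneg hy0 0),
      mul_nonneg (pow_nonneg hx0 8) (pow_nonneg hy0 1),
      mul_nonneg (pow_nonneg hx0 9) (pow_nonneg hy0 0)]
  linarith
end

section
/- For reals x, y ∈ [0,1/2] with (x,y) ≠ (0,0) and r = 1 - x - y, the quantity -2 + 2(1-r)³/r + 4x³ - 9x⁴ + 10x⁵ - 3x⁶ + 6x⁷ - 10x⁸ + 4x⁹ + 3y + 4xy + 2x³y + 15x⁴y - 18x⁵y + 6x⁶y - 11x⁷y + 8x⁸y + 4y² - 10x³y² - 7x⁴y² + 15x⁵y² - 4x⁶y² + 3x⁷y² - 3y³ + 6x²y³ + 14x³y³ - x⁴y³ - 8x⁵y³ + y⁴ - 9x²y⁴ - 11x³y⁴ + x⁴y⁴ + 2x⁵y⁴ + 5x²y⁵ + 5x³y⁵ - x²y⁶ - x³y⁶ is strictly greater than -2. -/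
lemma aux_Q (x : ℝ) (hx0 : 0 ≤ x) (hx1 : x ≤ 1 / 2) :
    0 ≤ 4 * x ^ 3 - 9 * x ^ 4 + 10 * x ^ 5 - 3 * x ^ 6 + 6 * x ^ 7 - 10 * x ^ 8 + 4 * x ^ 9 := by
  nlinarith [pow_nonneg hx0 3, pow_nonneg hx0 5, pow_nonneg hx0 7, sq_nonneg (2*x-1),
    mul_nonneg (pow_nonneg hx0 3) (sq_nonneg (2*x-1)),
    mul_nonneg (pow_nonneg hx0 5) (sq_nonneg (2*x-1)),
    mul_nonneg (pow_nonneg hx0 7) (sq_nonneg (2*x-1)),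
    mul_nonneg (pow_nonneg hx0 3) (sq_nonneg (3*x-1))]

lemma aux_S (x y : ℝ) (hx0 : 0 ≤ x) (hx1 : x ≤ 1 / 2)
    (hy0 : 0 ≤ y) (hy1 : y ≤ 1 / 2) :
    0 ≤ 3 + 4*x + 2*x^3 + 15*x^4 - 18*x^5 + 6*x^6 - 11*x^7 + 8*x^8
      + 4*y - 10*x^3*y - 7*x^4*y + 15*x^5*y - 4*x^6*y + 3*x^7*y
      - 3*y^2 + 6*x^2*y^2 + 14*x^3*y^2 - x^4*y^2 - 8*x^5*y^2
      + y^3 - 9*x^2*y^3 - 11*x^3*y^3 + x^4*y^3 + 2*x^5*y^3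
      + 5*x^2*y^4 + 5*x^3*y^4 - x^2*y^5 - x^3*y^5 := by
  have hx2 : x^2 ≤ 1/4 := by nlinarith
  have hx3 : x^3 ≤ 1/8 := by nlinarith [sq_nonneg x, mul_nonneg hx0 hx0]
  have hx4 : x^4 ≤ 1/16 := by nlinarith [pow_nonneg hx0 3]
  have hx5 : x^5 ≤ 1/32 := by nlinarith [pow_nonneg hx0 4]
  have hx6 : x^6 ≤ 1/64 := by nlinarith [pow_nonneg hx0 5]
  have hx7 : x^7 ≤ 1/128 := by nlinarith [pow_nonneg hx0 6]
  have hy2 : y^2 ≤ 1/4 := by nlinarith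
  have hy3 : y^3 ≤ 1/8 := by nlinarith [sq_nonneg y, mul_nonneg hy0 hy0]
  have hy5 : y^5 ≤ 1/32 := by nlinarith [pow_nonneg hy0 4]
  nlinarith [mul_nonneg (pow_nonneg hx0 3) hy0, mul_nonneg (pow_nonneg hx0 4) hy0,
    mul_nonneg (pow_nonneg hx0 6) hy0, mul_nonneg (sq_nonneg x) (sq_nonneg y),
    mul_nonneg (pow_nonneg hx0 4) (sq_nonneg y), mul_nonneg (pow_nonneg hx0 5) (sq_nonneg y),
    mul_nonneg (sq_nonneg x) (pow_nonneg hy0 3), mul_nonneg (pow_nonneg hx0 3) (pow_nonneg hy0 3),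
    mul_nonneg (sq_nonneg x) (pow_nonneg hy0 5), mul_nonneg (pow_nonneg hx0 3) (pow_nonneg hy0 5),
    mul_nonneg hx0 hy0, pow_nonneg hx0 5, pow_nonneg hx0 7,
    mul_le_mul hx3 hy1 hy0 (by norm_num : (0:ℝ) ≤ 1/8),
    mul_le_mul hx4 hy1 hy0 (by norm_num : (0:ℝ) ≤ 1/16),
    mul_le_mul hx6 hy1 hy0 (by norm_num : (0:ℝ) ≤ 1/64),
    mul_le_mul hx4 hy2 (sq_nonneg y) (by norm_num : (0:ℝ) ≤ 1/16),
    mul_le_mul hx5 hy2 (sq_nonneg y) (by norm_num : (0:ℝ) ≤ 1/32),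
    mul_le_mul hx2 hy3 (pow_nonneg hy0 3) (by norm_num : (0:ℝ) ≤ 1/4),
    mul_le_mul hx3 hy3 (pow_nonneg hy0 3) (by norm_num : (0:ℝ) ≤ 1/8),
    mul_le_mul hx2 hy5 (pow_nonneg hy0 5) (by norm_num : (0:ℝ) ≤ 1/4),
    mul_le_mul hx3 hy5 (pow_nonneg hy0 5) (by norm_num : (0:ℝ) ≤ 1/8)]

/-- Two-step drift lower bound `D₀` for the `n = 3` boundary state `(0,0,0,0)`
(case where the minimum is `I₀`) is `> -2` (Appendix A.5.1 of the paper). -/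
theorem stmt15 (x y : ℝ) (hx0 : 0 ≤ x) (hx1 : x ≤ 1 / 2)
    (hy0 : 0 ≤ y) (hy1 : y ≤ 1 / 2) (hne : (x, y) ≠ (0, 0))
    (r : ℝ) (hr : r = 1 - x - y) :
    -2 + 2 * (1 - r) ^ 3 / r
      + 4 * x ^ 3 - 9 * x ^ 4 + 10 * x ^ 5 - 3 * x ^ 6 + 6 * x ^ 7 - 10 * x ^ 8
      + 4 * x ^ 9 + 3 * y + 4 * x * y + 2 * x ^ 3 * y + 15 * x ^ 4 * y
      - 18 * x ^ 5 * y + 6 * x ^ 6 * y - 11 * x ^ 7 * y + 8 * x ^ 8 * y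
      + 4 * y ^ 2 - 10 * x ^ 3 * y ^ 2 - 7 * x ^ 4 * y ^ 2 + 15 * x ^ 5 * y ^ 2
      - 4 * x ^ 6 * y ^ 2 + 3 * x ^ 7 * y ^ 2 - 3 * y ^ 3 + 6 * x ^ 2 * y ^ 3
      + 14 * x ^ 3 * y ^ 3 - x ^ 4 * y ^ 3 - 8 * x ^ 5 * y ^ 3 + y ^ 4
      - 9 * x ^ 2 * y ^ 4 - 11 * x ^ 3 * y ^ 4 + x ^ 4 * y ^ 4 + 2 * x ^ 5 * y ^ 4
      + 5 * x ^ 2 * y ^ 5 + 5 * x ^ 3 * y ^ 5 - x ^ 2 * y ^ 6 - x ^ 3 * y ^ 6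
    > -2 := by
  have hQ := aux_Q x hx0 hx1
  have hS := aux_S x y hx0 hx1 hy0 hy1
  have hP := mul_nonneg hy0 hS
  have hr0 : 0 ≤ r := by rw [hr]; linarith
  rcases hr0.lt_or_eq with hrpos | hrz
  · have hs : 0 < x + y := by
      rcases hx0.lt_or_eq with h | h
      · linarith
      rcases hy0.lt_or_eq with h' | h'
      · linarith
      exact absurd (by rw [← h, ← h']) hne
    have h1r : (1 : ℝ) - r = x + y := by rw [hr]; ring
    have hdiv : 0 < 2 * (1 - r) ^ 3 / r := by
      rw [h1r]
      exact div_pos (by positivity) hrpos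
    linarith
  · have hx : x = 1 / 2 := by linarith [hr]
    have hy : y = 1 / 2 := by linarith [hr]
    subst hx hy
    rw [← hrz]
    norm_num
end

section
/- For reals x, y ∈ [0,1/2] with (x,y) ≠ (0,0) and r = 1 - x - y, the quantity -2 + 2(1-r)³/r + 4x³ - 7x⁴ + 6x⁵ - 7x⁶ + 22x⁷ - 24x⁸ + 8x⁹ + 3y + 4xy + x³y + 7x⁴y + 10x⁶y - 36x⁷y + 20x⁸y + 4y² - 5x³y² + 5x⁴y² - 15x⁵y² + 12x⁷y² - 3y³ + 6x²y³ + 4x³y³ - 9x⁴y³ + 14x⁵y³ - 4x⁶y³ + y⁴ - 9x²y⁴ - x³y⁴ + 3x⁴y⁴ - 4x⁵y⁴ + 5x²y⁵ - x²y⁶ is strictly greater than -2. -/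
set_option maxHeartbeats 1000000 in
lemma Pnn (x y : ℝ) (hx0 : 0 ≤ x) (hx1 : x ≤ 1 / 2)
    (hy0 : 0 ≤ y) (hy1 : y ≤ 1 / 2) :
    0 ≤ 4 * x ^ 3 - 7 * x ^ 4 + 6 * x ^ 5 - 7 * x ^ 6 + 22 * x ^ 7 - 24 * x ^ 8
      + 8 * x ^ 9 + 3 * y + 4 * x * y + x ^ 3 * y + 7 * x ^ 4 * y
      + 10 * x ^ 6 * y - 36 * x ^ 7 * y + 20 * x ^ 8 * y + 4 * y ^ 2
      - 5 * x ^ 3 * y ^ 2 + 5 * x ^ 4 * y ^ 2 - 15 * x ^ 5 * y ^ 2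
      + 12 * x ^ 7 * y ^ 2 - 3 * y ^ 3 + 6 * x ^ 2 * y ^ 3 + 4 * x ^ 3 * y ^ 3
      - 9 * x ^ 4 * y ^ 3 + 14 * x ^ 5 * y ^ 3 - 4 * x ^ 6 * y ^ 3 + y ^ 4
      - 9 * x ^ 2 * y ^ 4 - x ^ 3 * y ^ 4 + 3 * x ^ 4 * y ^ 4 - 4 * x ^ 5 * y ^ 4
      + 5 * x ^ 2 * y ^ 5 - x ^ 2 * y ^ 6 := by
  have h2 : x ^ 2 ≤ (1/2) ^ 2 := pow_le_pow_left₀ hx0 hx1 2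
  have h3 : x ^ 3 ≤ (1/2) ^ 3 := pow_le_pow_left₀ hx0 hx1 3
  have h5 : x ^ 5 ≤ (1/2) ^ 5 := pow_le_pow_left₀ hx0 hx1 5
  have h6 : x ^ 6 ≤ (1/2) ^ 6 := pow_le_pow_left₀ hx0 hx1 6
  have hy2 : y ^ 2 ≤ (1/2) ^ 2 := pow_le_pow_left₀ hy0 hy1 2
  have hy3 : y ^ 3 ≤ (1/2) ^ 3 := pow_le_pow_left₀ hy0 hy1 3
  have hy5 : y ^ 5 ≤ (1/2) ^ 5 := pow_le_pow_left₀ hy0 hy1 5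
  have hxp : ∀ n : ℕ, 0 ≤ x ^ n := fun n => pow_nonneg hx0 n
  have hyp : ∀ n : ℕ, 0 ≤ y ^ n := fun n => pow_nonneg hy0 n
  have h0 : 0 ≤ 4 * x ^ 3 - 7 * x ^ 4 + 6 * x ^ 5 - 7 * x ^ 6 + 22 * x ^ 7 - 24 * x ^ 8 + 8 * x ^ 9 := by
    have hq : 0 ≤ 4 - 7*x + 6*x^2 - 7*x^3 + 22*x^4 - 24*x^5 + 8*x^6 := by
      nlinarith [hxp 2, hxp 4, hxp 6, mul_nonneg (hxp 2) (by linarith : (0:ℝ) ≤ 6 - 7*x), mul_nonneg (hxp 4) (by linarith : (0:ℝ) ≤ 22 - 24*x)]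
    nlinarith [mul_nonneg (hxp 3) hq]
  have hc1 : (3:ℝ) ≤ 3 + 4*x + x^3 + 7*x^4 + 10*x^6 - 36*x^7 + 20*x^8 := by
    nlinarith [mul_nonneg hx0 (by nlinarith : (0:ℝ) ≤ 4 - 36*x^6), hxp 3, hxp 4, hxp 8]
  have hc2 : (0:ℝ) ≤ 4 - 5*x^3 + 5*x^4 - 15*x^5 + 12*x^7 := by
    nlinarith [hxp 4, hxp 7]
  have hc3 : (-3:ℝ) ≤ -3 + 6*x^2 + 4*x^3 - 9*x^4 + 14*x^5 - 4*x^6 := by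
    nlinarith [mul_nonneg (hxp 2) (by nlinarith : (0:ℝ) ≤ 6 - 9*x^2), mul_nonneg (hxp 5) (by linarith : (0:ℝ) ≤ 14 - 4*x), hxp 3]
  have hc4 : (-5/2:ℝ) ≤ 1 - 9*x^2 - x^3 + 3*x^4 - 4*x^5 := by
    nlinarith [hxp 4]
  have hxy5 : x^2 * y^5 ≤ 1/128 := by
    nlinarith [hxp 2, hyp 5, mul_le_mul h2 hy5 (hyp 5) (by norm_num : (0:ℝ) ≤ (1/2:ℝ)^2)]
  have hR : 0 ≤ (3 + 4*x + x^3 + 7*x^4 + 10*x^6 - 36*x^7 + 20*x^8)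
      + (4 - 5*x^3 + 5*x^4 - 15*x^5 + 12*x^7) * y
      + (-3 + 6*x^2 + 4*x^3 - 9*x^4 + 14*x^5 - 4*x^6) * y^2
      + (1 - 9*x^2 - x^3 + 3*x^4 - 4*x^5) * y^3
      + 5*x^2*y^4 - x^2*y^5 := by
    nlinarith [mul_nonneg (by linarith : (0:ℝ) ≤ 4 - 5*x^3 + 5*x^4 - 15*x^5 + 12*x^7) hy0,
      mul_nonneg (by linarith : (0:ℝ) ≤ (-3 + 6*x^2 + 4*x^3 - 9*x^4 + 14*x^5 - 4*x^6) + 3) (hyp 2),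
      mul_nonneg (by linarith : (0:ℝ) ≤ (1 - 9*x^2 - x^3 + 3*x^4 - 4*x^5) + 5/2) (hyp 3),
      mul_nonneg (hxp 2) (hyp 4), hy2, hy3, hxy5]
  linarith [mul_nonneg hy0 hR, h0]

/-- Two-step drift lower bound `D₁` for the `n = 3` boundary state `(0,0,0,0)`
(case where the minimum is `E[J̃ | f = (1,0,0,0)]`) is `> -2` (Appendix A.5.2). -/
theorem stmt16 (x y : ℝ) (hx0 : 0 ≤ x) (hx1 : x ≤ 1 / 2)
    (hy0 : 0 ≤ y) (hy1 : y ≤ 1 / 2) (hne : (x, y) ≠ (0, 0))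
    (r : ℝ) (hr : r = 1 - x - y) :
    -2 + 2 * (1 - r) ^ 3 / r
      + 4 * x ^ 3 - 7 * x ^ 4 + 6 * x ^ 5 - 7 * x ^ 6 + 22 * x ^ 7 - 24 * x ^ 8
      + 8 * x ^ 9 + 3 * y + 4 * x * y + x ^ 3 * y + 7 * x ^ 4 * y
      + 10 * x ^ 6 * y - 36 * x ^ 7 * y + 20 * x ^ 8 * y + 4 * y ^ 2
      - 5 * x ^ 3 * y ^ 2 + 5 * x ^ 4 * y ^ 2 - 15 * x ^ 5 * y ^ 2
      + 12 * x ^ 7 * y ^ 2 - 3 * y ^ 3 + 6 * x ^ 2 * y ^ 3 + 4 * x ^ 3 * y ^ 3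
      - 9 * x ^ 4 * y ^ 3 + 14 * x ^ 5 * y ^ 3 - 4 * x ^ 6 * y ^ 3 + y ^ 4
      - 9 * x ^ 2 * y ^ 4 - x ^ 3 * y ^ 4 + 3 * x ^ 4 * y ^ 4 - 4 * x ^ 5 * y ^ 4
      + 5 * x ^ 2 * y ^ 5 - x ^ 2 * y ^ 6
    > -2 := by
  have hP := Pnn x y hx0 hx1 hy0 hy1
  rcases lt_or_ge 0 r with hrpos | hrle
  · -- r > 0 : the division term is strictly positive
    have hxy : 0 < x + y := by
      rcases lt_or_eq_of_le hx0 with h | h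
      · linarith
      · rcases lt_or_eq_of_le hy0 with h' | h'
        · linarith
        · exact absurd (by rw [← h, ← h'] : (x, y) = (0, 0)) hne
    have hdiv : 0 < 2 * (1 - r) ^ 3 / r := by
      apply div_pos _ hrpos
      have : 1 - r = x + y := by rw [hr]; ring
      rw [this]; positivity
    linarith
  · -- r ≤ 0 : forces x = y = 1/2 and r = 0
    have hx : x = 1/2 := by linarith
    have hy : y = 1/2 := by linarith
    have hr0 : r = 0 := by rw [hr, hx, hy]; norm_num
    rw [hr0, hx, hy]; norm_num
end
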